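/- (Recurrence for odd Krawtchouk polynomials) With 𝒫₁(ε,ε̃) the odd Krawtchouk polynomial for data (q, q̃, V) satisfying diag(q)V diag(q̃)Vᵗ = q₀I (𝒫₁ := 0 when an argument lies outside {0,1}^{n+1} or the sizes disagree), for all i ∈ {0,...,n} and ε, ε̃ ∈ {0,1}^{n+1} with |ε| = |ε̃| = d: εᵢ·𝒫₁(ε, ε̃) = q₀⁻¹ q̃ᵢ Σ_{k,l=0}^n q_k v_{k,i} v_{l,i} (−1)^{s_k(ε̃−v_l)+s_l(ε̃)} ε̃_l · 𝒫₁(ε, ε̃ + v_k − v_l). -/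

import Mathlib

open Matrix

/-- Determinant of the square submatrix of `V` with rows `I` and columns `J`
(both taken in increasing order); sized by `I.card`. -/
noncomputable def mdet {n : ℕ} (V : Matrix (Fin (n+1)) (Fin (n+1)) ℂ)
    (I J : Finset (Fin (n+1))) : ℂ :=
  Matrix.det (Matrix.of fun a b : Fin I.card =>
    V ((I.sort (· ≤ ·)).getD a 0) ((J.sort (· ≤ ·)).getD b 0))

/-- The odd Krawtchouk polynomial `𝒫₁(ε,ε̃) = (1/d!) det(V_{I(ε̃),J(ε)})`, extended
by `0` when an argument lies outside `{0,1}^{n+1}` or the sizes disagree. -/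
noncomputable def P1 {n : ℕ} (V : Matrix (Fin (n+1)) (Fin (n+1)) ℂ)
    (ε εt : Fin (n+1) → ℤ) : ℂ :=
  if (∀ k, ε k = 0 ∨ ε k = 1) ∧ (∀ k, εt k = 0 ∨ εt k = 1) ∧
      (Finset.univ.filter fun k => ε k = 1).card
        = (Finset.univ.filter fun k => εt k = 1).card then
    (1 / ((Finset.univ.filter fun k => εt k = 1).card.factorial : ℂ)) *
      mdet V (Finset.univ.filter fun k => εt k = 1) (Finset.univ.filter fun k => ε k = 1)
  else 0

/-- Partial sum `s_k(ε) = Σ_{l<k} ε_l`. -/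
def sPart {n : ℕ} (k : Fin (n+1)) (ε : Fin (n+1) → ℤ) : ℤ :=
  ∑ l ∈ Finset.univ.filter (· < k), ε l

section Aux

lemma sum_indicator_eq_card {n : ℕ} (ε : Fin (n+1) → ℤ) (hε : ∀ k, ε k = 0 ∨ ε k = 1) :
    ∑ k, ε k = ((Finset.univ.filter fun k => ε k = 1).card : ℤ) := by
  rw [← Finset.sum_boole]
  exact Finset.sum_congr rfl fun k _ => by rcases hε k with h | h <;> simp [h]

lemma sPart_eq_card {n : ℕ} (l : Fin (n+1)) (ε : Fin (n+1) → ℤ)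
    (hε : ∀ k, ε k = 0 ∨ ε k = 1) :
    sPart l ε = (((Finset.univ.filter fun k => ε k = 1)).filter (· < l)).card := by
  unfold sPart
  rw [Finset.filter_comm, ← Finset.sum_boole]
  exact Finset.sum_congr rfl fun k _ => by rcases hε k with h | h <;> simp [h]

lemma card_filter_lt_orderEmb {n d : ℕ} (I : Finset (Fin (n+1))) (hI : I.card = d) (p : Fin d) :
    (I.filter (· < I.orderEmbOfFin hI p)).card = p := by
  set e := I.orderEmbOfFin hI with he
  have himg : I.filter (· < e p) = (Finset.Iio p).image e := by
    ext x
    simp only [Finset.mem_filter, Finset.mem_image, Finset.mem_Iio]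
    constructor
    · rintro ⟨hxI, hxlt⟩
      have : x ∈ Set.range e := by rw [he, Finset.range_orderEmbOfFin]; exact hxI
      obtain ⟨a, rfl⟩ := this
      exact ⟨a, (e.strictMono.lt_iff_lt).mp hxlt, rfl⟩
    · rintro ⟨a, hap, rfl⟩
      exact ⟨by simp [he], e.strictMono hap⟩
  rw [himg, Finset.card_image_of_injective _ e.injective, Fin.card_Iio]

lemma orderEmb_erase {n d : ℕ} (I : Finset (Fin (n+1))) (hI : I.card = d + 1) (p : Fin (d+1))
    (hK : (I.erase (I.orderEmbOfFin hI p)).card = d) (a : Fin d) :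
    (I.erase (I.orderEmbOfFin hI p)).orderEmbOfFin hK a = I.orderEmbOfFin hI (p.succAbove a) := by
  have h := Finset.orderEmbOfFin_unique hK
    (f := fun a : Fin d => I.orderEmbOfFin hI (p.succAbove a))
    (fun a => by
      refine Finset.mem_erase.2 ⟨fun h => ?_, Finset.orderEmbOfFin_mem _ _ _⟩
      exact Fin.succAbove_ne p a ((I.orderEmbOfFin hI).injective h))
    ((I.orderEmbOfFin hI).strictMono.comp (Fin.strictMono_succAbove p))
  exact (congrFun h a).symm

lemma mdet_eq {n d : ℕ} (V : Matrix (Fin (n+1)) (Fin (n+1)) ℂ)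
    (I J : Finset (Fin (n+1))) (hI : I.card = d) (hJ : J.card = d) :
    mdet V I J = Matrix.det (Matrix.of fun a b : Fin d =>
      V (I.orderEmbOfFin hI a) (J.orderEmbOfFin hJ b)) := by
  subst hI
  unfold mdet
  congr 1
  ext a b
  simp only [Matrix.of_apply]
  rw [Finset.orderEmbOfFin_apply, Finset.orderEmbOfFin_apply,
    List.getD_eq_getElem _ _ (by simp [Finset.length_sort]),
    List.getD_eq_getElem _ _ (by simpa [Finset.length_sort, hJ] using b.2)]
  rfl

lemma det_updateRow_sum' {m N : ℕ} (A : Matrix (Fin m) (Fin m) ℂ) (p : Fin m)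
    (w : Fin N → ℂ) (r : Fin N → Fin m → ℂ) :
    Matrix.det (A.updateRow p (∑ k, w k • r k))
      = ∑ k, w k * Matrix.det (A.updateRow p (r k)) := by
  have h1 : ∀ v : Fin m → ℂ, A.updateRow p v = Function.update A p v := fun v => by
    ext a b; by_cases h : a = p <;> simp [Matrix.updateRow_apply, Function.update, h]
  simp only [h1]
  have h2 := MultilinearMap.map_update_sum
    (Matrix.detRowAlternating (R := ℂ) (n := Fin m)).toMultilinearMap
    (Finset.univ : Finset (Fin N)) p (fun k => w k • r k) A
  simp only [AlternatingMap.coe_multilinearMap] at h2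
  rw [show Matrix.det (Function.update A p (∑ k, w k • r k))
      = Matrix.detRowAlternating (Function.update A p (∑ k, w k • r k)) from rfl, h2]
  refine Finset.sum_congr rfl fun k _ => ?_
  have h3 := MultilinearMap.map_update_smul
    (Matrix.detRowAlternating (R := ℂ) (n := Fin m)).toMultilinearMap A p (w k) (r k)
  simp only [AlternatingMap.coe_multilinearMap] at h3
  rw [h3]; rfl

lemma ortho {n : ℕ} (q qt : Fin (n+1) → ℂ) (hq0 : q 0 ≠ 0) (hqt : ∀ i, qt i ≠ 0)
    (V : Matrix (Fin (n+1)) (Fin (n+1)) ℂ)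
    (hV : diagonal q * V * diagonal qt * Vᵀ = q 0 • (1 : Matrix (Fin (n+1)) (Fin (n+1)) ℂ))
    (i j : Fin (n+1)) :
    (∑ k, q k * V k i * V k j) = if i = j then q 0 / qt i else 0 := by
  set B := diagonal q * V with hB
  set C := diagonal qt * Vᵀ with hC
  have hBC : B * C = q 0 • 1 := by rw [hB, hC, ← Matrix.mul_assoc]; exact hV
  have h1 : B * ((q 0)⁻¹ • C) = 1 := by
    rw [Matrix.mul_smul, hBC, smul_smul, inv_mul_cancel₀ hq0, one_smul]
  have h2 : ((q 0)⁻¹ • C) * B = 1 := mul_eq_one_comm.mp h1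
  have hCB : C * B = q 0 • 1 := by
    have := congrArg (fun M => q 0 • M) h2
    simpa [Matrix.smul_mul, smul_smul, mul_inv_cancel₀ hq0] using this
  have hentry := congrFun (congrFun hCB i) j
  have hL : (C * B) i j = qt i * ∑ k, V k i * (q k * V k j) := by
    rw [Matrix.mul_apply, Finset.mul_sum]
    refine Finset.sum_congr rfl fun m _ => ?_
    rw [hC, hB]
    simp only [Matrix.diagonal_mul, Matrix.transpose_apply]
    ring
  have hR : (q 0 • (1 : Matrix (Fin (n+1)) (Fin (n+1)) ℂ)) i j
      = if i = j then q 0 else 0 := by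
    simp [Matrix.smul_apply, Matrix.one_apply, mul_ite]
  rw [hL, hR] at hentry
  have hs : ∑ k, q k * V k i * V k j = ∑ k, V k i * (q k * V k j) :=
    Finset.sum_congr rfl fun k _ => by ring
  rw [hs]
  rcases eq_or_ne i j with rfl | hij
  · simp only [eq_self_iff_true, if_true] at hentry ⊢
    rw [eq_div_iff (hqt i)]
    linear_combination hentry
  · simp only [if_neg hij] at hentry ⊢
    exact (mul_eq_zero.mp hentry).resolve_left (hqt i)

end Aux

/-- Recurrence for the odd Krawtchouk polynomials:
`εᵢ 𝒫₁(ε,ε̃) = q₀⁻¹ q̃ᵢ Σ_{k,l} q_k v_{k,i} v_{l,i} (−1)^{s_k(ε̃−v_l)+s_l(ε̃)} ε̃_l 𝒫₁(ε, ε̃+v_k−v_l)`. -/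
theorem oddKr_recurrence (n d : ℕ) (hd : d ≤ n + 1)
    (q qt : Fin (n+1) → ℂ) (hq : ∀ i, q i ≠ 0) (hqt : ∀ i, qt i ≠ 0)
    (h0 : q 0 = qt 0)
    (V : Matrix (Fin (n+1)) (Fin (n+1)) ℂ)
    (hV : diagonal q * V * diagonal qt * Vᵀ
        = q 0 • (1 : Matrix (Fin (n+1)) (Fin (n+1)) ℂ))
    (ε εt : Fin (n+1) → ℤ)
    (hε : ∀ k, ε k = 0 ∨ ε k = 1) (hεt : ∀ k, εt k = 0 ∨ εt k = 1)
    (hsε : ∑ k, ε k = d) (hsεt : ∑ k, εt k = d)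
    (i : Fin (n+1)) :
    (ε i : ℂ) * P1 V ε εt
      = (q 0)⁻¹ * qt i * ∑ k, ∑ l,
          q k * V k i * V l i *
            (-1 : ℂ) ^ (sPart k (εt - Pi.single l 1) + sPart l εt) *
            (εt l : ℂ) * P1 V ε (εt + Pi.single k 1 - Pi.single l 1) := by
  classical
  set I : Finset (Fin (n+1)) := Finset.univ.filter (fun k => εt k = 1) with hIdef
  set J : Finset (Fin (n+1)) := Finset.univ.filter (fun k => ε k = 1) with hJdef
  have hI : I.card = d := by
    have h := sum_indicator_eq_card εt hεt
    rw [hsεt] at h; exact_mod_cast h.symm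
  have hJ : J.card = d := by
    have h := sum_indicator_eq_card ε hε
    rw [hsε] at h; exact_mod_cast h.symm
  -- trivial case d = 0
  rcases d with _ | m
  · have hεt0 : ∀ l, εt l = 0 := by
      intro l
      rcases hεt l with h | h
      · exact h
      · exfalso
        have : l ∈ I := by simp [hIdef, h]
        simpa [hI] using Finset.card_pos.2 ⟨l, this⟩
    have hε0 : ∀ l, ε l = 0 := by
      intro l
      rcases hε l with h | h
      · exact h
      · exfalso
        have : l ∈ J := by simp [hJdef, h]
        simpa [hJ] using Finset.card_pos.2 ⟨l, this⟩
    rw [hε0 i]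
    push_cast
    rw [zero_mul]
    rw [Finset.sum_eq_zero fun k _ => Finset.sum_eq_zero fun l _ => by
      rw [hεt0 l]; push_cast; ring]
    ring
  · -- main case d = m + 1
    set eI := I.orderEmbOfFin hI with heI
    set eJ := J.orderEmbOfFin hJ with heJ
    set A : Matrix (Fin (m+1)) (Fin (m+1)) ℂ :=
      Matrix.of (fun a b => V (eI a) (eJ b)) with hA
    set f : ℂ := ((m+1).factorial : ℂ) with hf
    have hP1 : P1 V ε εt = 1 / f * A.det := by
      unfold P1
      rw [if_pos ⟨hε, hεt, by rw [← hIdef, ← hJdef, hI, hJ]⟩, ← hIdef, ← hJdef, hI,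
        mdet_eq V I J hI hJ]
    have hεtI : ∀ p : Fin (m+1), εt (eI p) = 1 := by
      intro p
      have hmem := Finset.orderEmbOfFin_mem I hI p
      exact (Finset.mem_filter.mp hmem).2
    have hsq : ∀ N : ℕ, ((-1:ℂ)^N) * ((-1:ℂ)^N) = 1 := fun N => by
      rw [← pow_add, ← two_mul, pow_mul]; norm_num
    have claimC : ∀ (p : Fin (m+1)) (k : Fin (n+1)),
        (-1:ℂ) ^ (sPart k (εt - Pi.single (eI p) 1)) *
          P1 V ε (εt + Pi.single k 1 - Pi.single (eI p) 1)
        = (-1:ℂ) ^ ((p:ℕ)) * (1 / f) *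
            Matrix.det (A.updateRow p (fun b => V k (eJ b))) := by
      intro p k
      have hεtl : εt (eI p) = 1 := hεtI p
      have hlmem : eI p ∈ I := Finset.orderEmbOfFin_mem I hI p
      have hKcard : (I.erase (eI p)).card = m := by
        rw [Finset.card_erase_of_mem hlmem, hI]
        omega
      have hsubv : ∀ x, (εt - Pi.single (eI p) 1 : Fin (n+1) → ℤ) x = if x = eI p then 0 else εt x := by
        intro x
        by_cases hx : x = eI p
        · subst hx; simp [Pi.single_apply, hεtl]
        · simp [Pi.single_apply, hx]
      have h01sub : ∀ x, (εt - Pi.single (eI p) 1 : Fin (n+1) → ℤ) x = 0 ∨ (εt - Pi.single (eI p) 1 : Fin (n+1) → ℤ) x = 1 := by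
        intro x
        rw [hsubv x]
        by_cases hx : x = eI p
        · simp [hx]
        · simp only [if_neg hx]; exact hεt x
      have hsubfilter : (Finset.univ.filter fun x => (εt - Pi.single (eI p) 1 : Fin (n+1) → ℤ) x = 1)
          = I.erase (eI p) := by
        ext x
        simp only [Finset.mem_filter, Finset.mem_univ, true_and, Finset.mem_erase, hsubv x]
        by_cases hx : x = eI p
        · simp [hx]
        · simp only [if_neg hx, hx, not_false_iff, true_and]
          rw [hIdef, Finset.mem_filter]
          simp only [Finset.mem_univ, true_and]
          exact ⟨fun h => ⟨hx, h⟩, fun h => h.2⟩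
      have hsk : sPart k (εt - Pi.single (eI p) 1)
          = (((I.erase (eI p)).filter (· < k)).card : ℤ) := by
        rw [sPart_eq_card _ _ h01sub, hsubfilter]
      -- case split on k
      by_cases hkl : k = eI p
      · -- k = l
        have hε'eq : (εt + Pi.single k 1 - Pi.single (eI p) 1 : Fin (n+1) → ℤ) = εt := by
          rw [hkl]; ext x; simp
        have hfilt : (I.erase (eI p)).filter (· < eI p) = I.filter (· < eI p) := by
          rw [Finset.filter_erase, Finset.erase_eq_of_notMem]
          simp
        have hcard : (((I.erase (eI p)).filter (· < k)).card : ℤ) = ((p:ℕ) : ℤ) := by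
          rw [hkl, hfilt]
          exact_mod_cast congrArg (Nat.cast (R := ℤ)) (card_filter_lt_orderEmb I hI p)
        have hrow : (fun b => V k (eJ b)) = A p := funext fun b => by rw [hkl]; rfl
        rw [hε'eq, hsk, hcard, hP1, hrow, Matrix.updateRow_eq_self, zpow_natCast]
        ring
      · by_cases hk1 : εt k = 1
        · -- k ∈ I, k ≠ l : both sides vanish
          have hkI : k ∈ I := by rw [hIdef]; simp [hk1]
          have hP10 : P1 V ε (εt + Pi.single k 1 - Pi.single (eI p) 1) = 0 := by
            unfold P1
            rw [if_neg]
            rintro ⟨-, h2, -⟩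
            have hval : (εt + Pi.single k 1 - Pi.single (eI p) 1 : Fin (n+1) → ℤ) k = 2 := by
              simp [Pi.single_apply, hkl, hk1]
            have h := h2 k
            rw [hval] at h
            omega
          have hp' : ∃ p' : Fin (m+1), eI p' = k := by
            have : k ∈ Set.range eI := by
              rw [heI, Finset.range_orderEmbOfFin]; exact_mod_cast hkI
            exact this
          obtain ⟨p', hp'⟩ := hp'
          have hp'ne : p' ≠ p := fun h => hkl (by rw [← hp', h])
          have hdet0 : Matrix.det (A.updateRow p (fun b => V k (eJ b))) = 0 := by
            apply Matrix.det_zero_of_row_eq hp'ne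
            rw [Matrix.updateRow_ne hp'ne, Matrix.updateRow_self]
            funext b
            show A p' b = V k (eJ b)
            rw [hA]; simp only [Matrix.of_apply]; rw [hp']
          rw [hP10, hdet0]
          ring
        · -- k ∉ I
          have hk0 : εt k = 0 := (hεt k).resolve_right hk1
          have hkI : k ∉ I := by
            rw [hIdef]; simp [hk0]
          have hkK : k ∉ I.erase (eI p) := fun h => hkI (Finset.mem_of_mem_erase h)
          set I' : Finset (Fin (n+1)) := insert k (I.erase (eI p)) with hI'def
          have hI' : I'.card = m + 1 := by
            rw [hI'def, Finset.card_insert_of_notMem hkK, hKcard]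
          have hε'v : ∀ x, (εt + Pi.single k 1 - Pi.single (eI p) 1 : Fin (n+1) → ℤ) x
              = if x = k then 1 else if x = eI p then 0 else εt x := by
            intro x
            by_cases hxk : x = k
            · subst hxk
              simp [Pi.single_apply, hkl, hk0]
            · by_cases hxl : x = eI p
              · subst hxl
                simp [Pi.single_apply, hxk, hεtl]
              · simp [Pi.single_apply, hxk, hxl]
          have h01' : ∀ x, (εt + Pi.single k 1 - Pi.single (eI p) 1 : Fin (n+1) → ℤ) x = 0 ∨
              (εt + Pi.single k 1 - Pi.single (eI p) 1 : Fin (n+1) → ℤ) x = 1 := by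
            intro x
            rw [hε'v x]
            by_cases hxk : x = k
            · simp [hxk]
            · by_cases hxl : x = eI p
              · have hne : ¬ (eI p = k) := by rw [← hxl]; exact hxk
                simp [hxl, hne]
              · simp only [if_neg hxk, if_neg hxl]; exact hεt x
          have hfilter' : (Finset.univ.filter
              fun x => (εt + Pi.single k 1 - Pi.single (eI p) 1 : Fin (n+1) → ℤ) x = 1) = I' := by
            ext x
            simp only [Finset.mem_filter, Finset.mem_univ, true_and, hε'v x, hI'def,
              Finset.mem_insert, Finset.mem_erase]
            by_cases hxk : x = k
            · simp [hxk]
            · by_cases hxl : x = eI p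
              · simp [hxk, hxl]
              · simp only [if_neg hxk, if_neg hxl, hxk, hxl, false_or, not_false_iff,
                  true_and]
                rw [hIdef, Finset.mem_filter]
                simp only [Finset.mem_univ, true_and]
                exact ⟨fun h => ⟨hxl, h⟩, fun h => h.2⟩
          set A' : Matrix (Fin (m+1)) (Fin (m+1)) ℂ :=
            Matrix.of (fun a b => V (I'.orderEmbOfFin hI' a) (eJ b)) with hA'
          have hP1' : P1 V ε (εt + Pi.single k 1 - Pi.single (eI p) 1) = 1 / f * A'.det := by
            unfold P1
            rw [hfilter', if_pos ⟨hε, h01', by rw [← hJdef, hI', hJ]⟩, ← hJdef, hI',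
              mdet_eq V I' J hI' hJ]
          have hj : ∃ j : Fin (m+1), I'.orderEmbOfFin hI' j = k := by
            have : k ∈ Set.range (I'.orderEmbOfFin hI') := by
              rw [Finset.range_orderEmbOfFin]
              exact_mod_cast Finset.mem_insert_self k _
            exact this
          obtain ⟨j, hj⟩ := hj
          have hskj : (((I.erase (eI p)).filter (· < k)).card) = (j:ℕ) := by
            have h1 : I'.filter (· < k) = (I.erase (eI p)).filter (· < k) := by
              show (insert k (I.erase (eI p))).filter (· < k) = _
              rw [Finset.filter_insert, if_neg (lt_irrefl k)]
            have h2 := card_filter_lt_orderEmb I' hI' j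
            rw [hj] at h2
            rw [← h1, h2]
          -- embedding of the erased set, two ways
          have hIemb : ∀ a : Fin m, eI (p.succAbove a)
              = (I.erase (eI p)).orderEmbOfFin hKcard a :=
            fun a => (orderEmb_erase I hI p hKcard a).symm
          have hKemb : ∀ a : Fin m, I'.orderEmbOfFin hI' (j.succAbove a)
              = (I.erase (eI p)).orderEmbOfFin hKcard a := by
            have h := Finset.orderEmbOfFin_unique hKcard
              (f := fun a : Fin m => I'.orderEmbOfFin hI' (j.succAbove a))
              (fun a => by
                have hmem' := Finset.orderEmbOfFin_mem I' hI' (j.succAbove a)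
                rcases Finset.mem_insert.mp hmem' with h | h
                · exfalso
                  rw [← hj] at h
                  exact Fin.succAbove_ne j a ((I'.orderEmbOfFin hI').injective h)
                · exact h)
              ((I'.orderEmbOfFin hI').strictMono.comp (Fin.strictMono_succAbove j))
            exact fun a => congrFun h a
          -- the common minor
          set M : Fin (m+1) → Matrix (Fin m) (Fin m) ℂ := fun b =>
            Matrix.of (fun a c => V ((I.erase (eI p)).orderEmbOfFin hKcard a)
              (eJ (b.succAbove c))) with hM
          have hU : Matrix.det (A.updateRow p (fun b => V k (eJ b)))
              = ∑ b : Fin (m+1), (-1:ℂ)^((p:ℕ)+(b:ℕ)) * V k (eJ b) * (M b).det := by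
            rw [Matrix.det_succ_row _ p]
            refine Finset.sum_congr rfl fun b _ => ?_
            have e1 : (A.updateRow p (fun b' => V k (eJ b'))) p b = V k (eJ b) := by
              rw [Matrix.updateRow_self]
            have e2 : (A.updateRow p (fun b' => V k (eJ b'))).submatrix p.succAbove b.succAbove
                = M b := by
              ext a c
              rw [Matrix.submatrix_apply, Matrix.updateRow_ne (Fin.succAbove_ne p a)]
              show V (eI (p.succAbove a)) (eJ (b.succAbove c)) = _
              rw [hIemb a]
              rfl
            rw [e1, e2]
          have hA'd : A'.det = ∑ b : Fin (m+1), (-1:ℂ)^((j:ℕ)+(b:ℕ)) * V k (eJ b) * (M b).det := by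
            rw [Matrix.det_succ_row _ j]
            refine Finset.sum_congr rfl fun b _ => ?_
            have e1 : A' j b = V k (eJ b) := by
              show V (I'.orderEmbOfFin hI' j) (eJ b) = _
              rw [hj]
            have e2 : A'.submatrix j.succAbove b.succAbove = M b := by
              ext a c
              rw [Matrix.submatrix_apply]
              show V (I'.orderEmbOfFin hI' (j.succAbove a)) (eJ (b.succAbove c)) = _
              rw [hKemb a]
              rfl
            rw [e1, e2]
          rw [hsk, hskj, zpow_natCast, hP1', hU, hA'd, Finset.mul_sum, Finset.mul_sum,
            Finset.mul_sum]
          refine Finset.sum_congr rfl fun b _ => ?_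
          have h1 := hsq (j:ℕ)
          have h2 := hsq (p:ℕ)
          have c1 : ℂ := 1
          linear_combination (1/f * (-1:ℂ)^(b:ℕ) * V k (eJ b) * (M b).det) * h1
            - (1/f * (-1:ℂ)^(b:ℕ) * V k (eJ b) * (M b).det) * h2

    -- the special row χ
    set χ : Fin (m+1) → ℂ := fun b => if i = eJ b then q 0 / qt i else 0 with hχ
    have hχsum : (∑ k : Fin (n+1), (q k * V k i) • (fun b : Fin (m+1) => V k (eJ b))) = χ := by
      funext b
      rw [Finset.sum_apply]
      simp only [Pi.smul_apply, smul_eq_mul]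
      show _ = if i = eJ b then q 0 / qt i else 0
      rw [← ortho q qt (hq 0) hqt V hV i (eJ b)]
    have hdetχ : ∀ p : Fin (m+1),
        (∑ k : Fin (n+1), (q k * V k i) * Matrix.det (A.updateRow p (fun b => V k (eJ b))))
          = Matrix.det (A.updateRow p χ) := by
      intro p
      have h := det_updateRow_sum' A p (fun k => q k * V k i) (fun k => (fun b => V k (eJ b)))
      rw [hχsum] at h
      exact h.symm
    -- swap sums and restrict to I
    rw [Finset.sum_comm]
    have hvanish : ∀ l ∈ (Finset.univ : Finset (Fin (n+1))), l ∉ I →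
        (∑ k, q k * V k i * V l i *
          (-1 : ℂ) ^ (sPart k (εt - Pi.single l 1) + sPart l εt) *
          (εt l : ℂ) * P1 V ε (εt + Pi.single k 1 - Pi.single l 1)) = 0 := by
      intro l _ hl
      have h0 : εt l = 0 := by
        rcases hεt l with h | h
        · exact h
        · exact absurd (by rw [hIdef]; simp [h] : l ∈ I) hl
      exact Finset.sum_eq_zero fun k _ => by rw [h0]; push_cast; ring
    rw [← Finset.sum_subset (Finset.subset_univ I) hvanish]
    -- reindex the sum over I by Fin (m+1)
    have hbij : (∑ l ∈ I, ∑ k, q k * V k i * V l i *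
          (-1 : ℂ) ^ (sPart k (εt - Pi.single l 1) + sPart l εt) *
          (εt l : ℂ) * P1 V ε (εt + Pi.single k 1 - Pi.single l 1))
        = ∑ p : Fin (m+1), ∑ k, q k * V k i * V (eI p) i *
          (-1 : ℂ) ^ (sPart k (εt - Pi.single (eI p) 1) + sPart (eI p) εt) *
          (εt (eI p) : ℂ) * P1 V ε (εt + Pi.single k 1 - Pi.single (eI p) 1) := by
      refine (Finset.sum_bij (fun (p : Fin (m+1)) (_ : p ∈ Finset.univ) => eI p)
        ?_ ?_ ?_ ?_).symm
      · intro p _; exact Finset.orderEmbOfFin_mem I hI p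
      · intro p _ p' _ h; exact eI.injective h
      · intro l hl
        have : l ∈ Set.range eI := by rw [heI, Finset.range_orderEmbOfFin]; exact_mod_cast hl
        obtain ⟨p, hp⟩ := this
        exact ⟨p, Finset.mem_univ p, hp⟩
      · intro p _; rfl
    rw [hbij]
    -- evaluate the inner sums
    have hper : ∀ p : Fin (m+1),
        (∑ k, q k * V k i * V (eI p) i *
          (-1 : ℂ) ^ (sPart k (εt - Pi.single (eI p) 1) + sPart (eI p) εt) *
          (εt (eI p) : ℂ) * P1 V ε (εt + Pi.single k 1 - Pi.single (eI p) 1))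
        = V (eI p) i * (1/f) * Matrix.det (A.updateRow p χ) := by
      intro p
      have hsl : sPart (eI p) εt = ((p:ℕ) : ℤ) := by
        rw [sPart_eq_card _ _ hεt]
        rw [show (Finset.univ.filter fun k => εt k = 1) = I from hIdef.symm]
        exact_mod_cast congrArg (Nat.cast (R:=ℤ)) (card_filter_lt_orderEmb I hI p)
      have step1 : ∀ k, q k * V k i * V (eI p) i *
            (-1 : ℂ) ^ (sPart k (εt - Pi.single (eI p) 1) + sPart (eI p) εt) *
            (εt (eI p) : ℂ) * P1 V ε (εt + Pi.single k 1 - Pi.single (eI p) 1)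
          = V (eI p) i * (1/f) *
              ((q k * V k i) * Matrix.det (A.updateRow p (fun b => V k (eJ b)))) := by
        intro k
        rw [hsl, zpow_add₀ (by norm_num : (-1:ℂ) ≠ 0), zpow_natCast, hεtI p]
        push_cast
        linear_combination (q k * V k i * V (eI p) i * (-1:ℂ)^((p:ℕ))) * claimC p k
          + (q k * V k i * V (eI p) i * (1/f) *
              Matrix.det (A.updateRow p (fun b => V k (eJ b)))) * hsq (p:ℕ)
      rw [Finset.sum_congr rfl fun k _ => step1 k, ← Finset.mul_sum, hdetχ p]
    rw [Finset.sum_congr rfl fun p _ => hper p]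
    -- branch on whether i is in the support of ε
    by_cases hiJ : i ∈ J
    · -- i ∈ J
      have hεi : ε i = 1 := (Finset.mem_filter.mp hiJ).2
      have hc : ∃ c : Fin (m+1), eJ c = i := by
        have : i ∈ Set.range eJ := by rw [heJ, Finset.range_orderEmbOfFin]; exact_mod_cast hiJ
        exact this
      obtain ⟨c, hc⟩ := hc
      have hχc : χ = (q 0 / qt i) • (Pi.single c 1 : Fin (m+1) → ℂ) := by
        funext b
        show (if i = eJ b then q 0 / qt i else 0) = _
        by_cases hb : b = c
        · subst hb
          rw [if_pos (by rw [hc])]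
          simp [Pi.single_apply]
        · rw [if_neg (fun h => hb (eJ.injective (by rw [← h, hc])))]
          simp [Pi.single_apply, hb]
      have hdetp : ∀ p : Fin (m+1),
          Matrix.det (A.updateRow p χ) = (q 0 / qt i) * adjugate A c p := by
        intro p
        rw [hχc, Matrix.det_updateRow_smul, ← Matrix.adjugate_apply]
      have hsum : ∑ p : Fin (m+1), adjugate A c p * A p c = A.det := by
        have h := congrFun (congrFun (Matrix.adjugate_mul A) c) c
        simpa [Matrix.mul_apply, Matrix.one_apply] using h
      have hApc : ∀ p : Fin (m+1), V (eI p) i = A p c := fun p => by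
        show _ = V (eI p) (eJ c)
        rw [hc]
      have hf0 : f ≠ 0 := by
        rw [hf]
        exact Nat.cast_ne_zero.mpr (Nat.factorial_ne_zero _)
      rw [Finset.sum_congr rfl fun p _ =>
        show V (eI p) i * (1/f) * Matrix.det (A.updateRow p χ)
            = (1/f) * (q 0 / qt i) * (adjugate A c p * A p c) from by
          rw [hdetp p, hApc p]; ring]
      rw [← Finset.mul_sum, hsum, hεi, hP1]
      push_cast
      field_simp
      rw [eq_div_iff (mul_ne_zero (hq 0) (hqt i))]
      ring
    · -- i ∉ J
      have hεi : ε i = 0 := by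
        rcases hε i with h | h
        · exact h
        · exact absurd (by rw [hJdef]; simp [h] : i ∈ J) hiJ
      have hχ0 : χ = fun _ => 0 := by
        funext b
        show (if i = eJ b then q 0 / qt i else 0) = 0
        exact if_neg fun h => hiJ (by rw [h]; exact Finset.orderEmbOfFin_mem J hJ b)
      have hdet0 : ∀ p : Fin (m+1), Matrix.det (A.updateRow p χ) = 0 := by
        intro p
        refine Matrix.det_eq_zero_of_row_eq_zero p fun b => ?_
        rw [Matrix.updateRow_self, hχ0]
      rw [hεi]
      push_cast
      rw [Finset.sum_congr rfl fun p _ => by rw [hdet0 p]]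
      simp
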